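/- Let C be a nonempty closed spherically convex subset of the unit sphere S of ℝⁿ whose diameter for the angular metric is strictly less than π. Then the intrinsic circumradius of C is less than π/2: there exists c₀ ∈ C such that sup_{x∈C} d(c₀,x) < π/2. -/

import Mathlib

open scoped RealInnerProductSpace

/-- The unit sphere of `ℝⁿ`. -/
def unitSphere (n : ℕ) : Set (EuclideanSpace ℝ (Fin n)) := {x | ‖x‖ = 1}

/-- The angular metric on the unit sphere. -/
noncomputable def sdist {n : ℕ} (x y : EuclideanSpace ℝ (Fin n)) : ℝ :=
  Real.arccos ⟪x, y⟫

/-- A subset of the unit sphere is spherically convex if for all non-antipodal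
distinct points `x, y` of it, the minimizing geodesic from `x` to `y` is
contained in it. -/
def SphConvex {n : ℕ} (C : Set (EuclideanSpace ℝ (Fin n))) : Prop :=
  ∀ x ∈ C, ∀ y ∈ C, x ≠ y → x ≠ -y → ∀ t ∈ Set.Icc (0 : ℝ) 1,
    (Real.sin ((1 - t) * sdist x y) / Real.sin (sdist x y)) • x +
      (Real.sin (t * sdist x y) / Real.sin (sdist x y)) • y ∈ C

/-!
Carathéodory's theorem makes the convex hull `K` of the compact set `C` compact. Spherical
convexity and the absence of antipodal pairs make the open cone `(0, ∞) • C` convex, so every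
point of `K` is a positive multiple of a point of `C`. The point of `K` nearest the origin is then
`μ • c₀` with `μ > 0` and `c₀ ∈ C`, and the obtuse-angle criterion for this nearest point gives
`μ ≤ ⟪c₀, x⟫` for all `x ∈ C`, i.e. `sdist c₀ x ≤ arccos μ < π / 2`.
-/

open scoped Pointwise
open Real Set

lemma isCompact_convexHull {E : Type*} [NormedAddCommGroup E] [NormedSpace ℝ E]
    [FiniteDimensional ℝ E] {s : Set E} (hs : IsCompact s) : IsCompact (convexHull ℝ s) := by
  set N := Module.finrank ℝ E + 1
  let Φ : (Fin N → ℝ) × (Fin N → E) → E := fun p => ∑ j, p.1 j • p.2 j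
  suffices convexHull ℝ s = Φ '' (stdSimplex ℝ (Fin N) ×ˢ univ.pi fun _ => s) from
    this ▸ ((isCompact_stdSimplex ℝ _).prod (isCompact_univ_pi fun _ => hs)).image (by fun_prop)
  refine Subset.antisymm ?_ ?_
  · intro x hx
    obtain ⟨ι, _, z, w, hzs, hz, hw0, hw1, rfl⟩ := eq_pos_convex_span_of_mem_convexHull hx
    obtain ⟨x₀, hx₀⟩ : s.Nonempty := (convexHull_nonempty_iff.1 ⟨_, hx⟩)
    obtain ⟨e⟩ : Nonempty (ι ↪ Fin N) := Function.Embedding.nonempty_of_card_le <| by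
      simpa [N] using hz.card_le_finrank_succ.trans
        (Nat.succ_le_succ (Submodule.finrank_le _))
    classical
    let W := Function.extend e w 0
    let Z := Function.extend e z fun _ => x₀
    have hW : ∀ j ∉ range e, W j = 0 := fun j hj =>
      Function.extend_apply' _ _ _ (by simpa using hj)
    refine ⟨(W, Z), ⟨⟨fun j => ?_, ?_⟩, fun j _ => ?_⟩, ?_⟩
    · by_cases hj : j ∈ range e
      · obtain ⟨i, rfl⟩ := hj
        simpa [W, e.injective.extend_apply] using (hw0 i).le
      · simp [hW j hj]
    · rw [← hw1]
      exact (Fintype.sum_of_injective e e.injective _ _ hW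
        fun i => by simp [W, e.injective.extend_apply]).symm
    · by_cases hj : j ∈ range e
      · obtain ⟨i, rfl⟩ := hj
        simpa [Z, e.injective.extend_apply] using hzs (mem_range_self i)
      · simpa [Z, Function.extend_apply' _ _ _ (by simpa using hj)] using hx₀
    · exact (Fintype.sum_of_injective e e.injective _ _ (fun j hj => by simp [hW j hj])
        fun i => by simp [W, Z, e.injective.extend_apply]).symm
  · rintro _ ⟨⟨W, Z⟩, ⟨⟨hW0, hW1⟩, hZ⟩, rfl⟩
    exact (convex_convexHull ℝ s).sum_mem (fun j _ => hW0 j) hW1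
      fun j _ => subset_convexHull ℝ s (hZ j (mem_univ j))

lemma Real.sin_add_le_sin_add_sin {u v : ℝ} (hu : u ∈ Icc 0 π) (hv : v ∈ Icc 0 π) :
    sin (u + v) ≤ sin u + sin v := by
  have hsu := sin_nonneg_of_nonneg_of_le_pi hu.1 hu.2
  have hsv := sin_nonneg_of_nonneg_of_le_pi hv.1 hv.2
  rw [sin_add]
  nlinarith [cos_le_one u, cos_le_one v]

lemma Real.exists_mul_sin_eq_mul_sin {A B θ : ℝ} (hA : 0 ≤ A) (hB : 0 ≤ B) (hθ : θ ∈ Icc 0 π) :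
    ∃ t ∈ Icc (0 : ℝ) 1, A * sin (t * θ) = B * sin ((1 - t) * θ) := by
  have hsin := sin_nonneg_of_nonneg_of_le_pi hθ.1 hθ.2
  obtain ⟨t, ht, hft⟩ := intermediate_value_Icc zero_le_one
    (f := fun t => A * sin (t * θ) - B * sin ((1 - t) * θ)) (by fun_prop)
    (show (0 : ℝ) ∈ Icc _ _ from
      ⟨by simpa using mul_nonneg hB hsin, by simpa using mul_nonneg hA hsin⟩)
  exact ⟨t, ht, sub_eq_zero.1 hft⟩

section Sphere

variable {n : ℕ}

noncomputable def sphGeodesic (x y : EuclideanSpace ℝ (Fin n)) (t : ℝ) :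
    EuclideanSpace ℝ (Fin n) :=
  (sin ((1 - t) * sdist x y) / sin (sdist x y)) • x +
    (sin (t * sdist x y) / sin (sdist x y)) • y

lemma SphConvex.sphGeodesic_mem {C : Set (EuclideanSpace ℝ (Fin n))} (hC : SphConvex C)
    {x y : EuclideanSpace ℝ (Fin n)} (hx : x ∈ C) (hy : y ∈ C) (hxy : x ≠ y) (hxy' : x ≠ -y)
    {t : ℝ} (ht : t ∈ Icc (0 : ℝ) 1) : sphGeodesic x y t ∈ C :=
  hC x hx y hy hxy hxy' t ht

lemma sdist_neg_self {y : EuclideanSpace ℝ (Fin n)} (hy : ‖y‖ = 1) : sdist (-y) y = π := by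
  simp [sdist, inner_neg_left, hy]

lemma sdist_mem_Ioo {x y : EuclideanSpace ℝ (Fin n)} (hx : ‖x‖ = 1) (hy : ‖y‖ = 1)
    (hxy : x ≠ y) (hxy' : x ≠ -y) : sdist x y ∈ Ioo 0 π := by
  have h1 : ⟪x, y⟫ < 1 := (inner_lt_one_iff_real_of_norm_eq_one hx hy).2 hxy
  have h2 : ⟪-x, y⟫ < 1 :=
    (inner_lt_one_iff_real_of_norm_eq_one (by rwa [norm_neg]) hy).2 fun h => hxy' (by simp [← h])
  rw [inner_neg_left] at h2
  exact ⟨arccos_pos.2 h1, arccos_lt_pi.2 (by linarith)⟩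

lemma exists_smul_sphGeodesic_eq {x y : EuclideanSpace ℝ (Fin n)} (hx : ‖x‖ = 1) (hy : ‖y‖ = 1)
    (hxy : x ≠ y) (hxy' : x ≠ -y) {A B : ℝ} (hA : 0 ≤ A) (hB : 0 ≤ B) (hAB : 0 < A + B) :
    ∃ t ∈ Icc (0 : ℝ) 1, ∃ c : ℝ, 0 < c ∧ A • x + B • y = c • sphGeodesic x y t := by
  set θ := sdist x y
  have hθ : θ ∈ Ioo 0 π := sdist_mem_Ioo hx hy hxy hxy'
  have hsinθ : 0 < sin θ := sin_pos_of_pos_of_lt_pi hθ.1 hθ.2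
  obtain ⟨t, ht, hAB_eq⟩ := exists_mul_sin_eq_mul_sin hA hB (Ioo_subset_Icc_self hθ)
  have hu : (1 - t) * θ ∈ Icc 0 π := ⟨mul_nonneg (sub_nonneg.2 ht.2) hθ.1.le,
    (mul_le_of_le_one_left hθ.1.le (by linarith [ht.1])).trans hθ.2.le⟩
  have hv : t * θ ∈ Icc 0 π :=
    ⟨mul_nonneg ht.1 hθ.1.le, (mul_le_of_le_one_left hθ.1.le ht.2).trans hθ.2.le⟩
  have hsum : sin θ ≤ sin ((1 - t) * θ) + sin (t * θ) := by
    simpa [← add_mul] using sin_add_le_sin_add_sin hu hv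
  have hpos : 0 < sin ((1 - t) * θ) + sin (t * θ) := hsinθ.trans_le hsum
  refine ⟨t, ht, (A + B) * sin θ / (sin ((1 - t) * θ) + sin (t * θ)), by positivity, ?_⟩
  change _ = _ • ((sin ((1 - t) * θ) / sin θ) • x + (sin (t * θ) / sin θ) • y)
  rw [smul_add, smul_smul, smul_smul]
  congr 2 <;> field_simp <;> linarith

lemma convex_Ioi_smul {C : Set (EuclideanSpace ℝ (Fin n))} (hsub : C ⊆ unitSphere n)
    (hconv : SphConvex C) (hanti : ∀ x ∈ C, ∀ y ∈ C, x ≠ -y) :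
    Convex ℝ (Ioi (0 : ℝ) • C) := by
  rw [convex_iff_forall_pos]
  rintro _ ⟨μ, hμ : 0 < μ, c, hc, rfl⟩ _ ⟨ν, hν : 0 < ν, d, hd, rfl⟩ α β hα hβ -
  simp only [smul_smul]
  by_cases hcd : c = d
  · subst hcd
    exact ⟨α * μ + β * ν, mem_Ioi.2 (by positivity), c, hc, add_smul _ _ _⟩
  obtain ⟨t, ht, κ, hκ, heq⟩ := exists_smul_sphGeodesic_eq (hsub hc) (hsub hd) hcd
    (hanti c hc d hd) (by positivity : 0 ≤ α * μ) (by positivity : 0 ≤ β * ν) (by positivity)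
  exact ⟨κ, hκ, _, hconv.sphGeodesic_mem hc hd hcd (hanti c hc d hd) ht, heq.symm⟩

lemma convexHull_subset_Ioi_smul {C : Set (EuclideanSpace ℝ (Fin n))} (hsub : C ⊆ unitSphere n)
    (hconv : SphConvex C) (hanti : ∀ x ∈ C, ∀ y ∈ C, x ≠ -y) :
    convexHull ℝ C ⊆ Ioi (0 : ℝ) • C :=
  convexHull_min (fun c hc => ⟨1, mem_Ioi.2 one_pos, c, hc, one_smul _ _⟩)
    (convex_Ioi_smul hsub hconv hanti)

end Sphere

lemma exists_mem_forall_norm_sq_le_inner {F : Type*} [NormedAddCommGroup F]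
    [InnerProductSpace ℝ F] {K : Set F} (hne : K.Nonempty) (hK : IsComplete K)
    (hconv : Convex ℝ K) :
    ∃ p ∈ K, ∀ w ∈ K, ‖p‖ ^ 2 ≤ ⟪p, w⟫ := by
  obtain ⟨p, hp, hmin⟩ := exists_norm_eq_iInf_of_complete_convex hne hK hconv 0
  refine ⟨p, hp, fun w hw => ?_⟩
  have hobtuse := (norm_eq_iInf_iff_real_inner_le_zero hconv hp).1 hmin w hw
  rw [zero_sub, inner_neg_left, inner_sub_right, real_inner_self_eq_norm_sq] at hobtuse
  linarith

theorem stmt6 {n : ℕ} (C : Set (EuclideanSpace ℝ (Fin n)))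
    (hne : C.Nonempty) (hcl : IsClosed C) (hsub : C ⊆ unitSphere n)
    (hconv : SphConvex C)
    -- the diameter of `C` for the angular metric is strictly less than `π`
    (hdiam : ∃ D : ℝ, D < Real.pi ∧ ∀ x ∈ C, ∀ y ∈ C, sdist x y ≤ D) :
    ∃ c₀ ∈ C, ∃ r : ℝ, r < Real.pi / 2 ∧ ∀ x ∈ C, sdist c₀ x ≤ r := by
  obtain ⟨D, hDπ, hdiam⟩ := hdiam
  have hanti : ∀ x ∈ C, ∀ y ∈ C, x ≠ -y := by
    rintro _ hx y hy rfl
    have hπD := hdiam _ hx y hy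
    rw [sdist_neg_self (hsub hy)] at hπD
    linarith
  have hC : IsCompact C := (isCompact_sphere 0 1).of_isClosed_subset hcl
    fun x hx => mem_sphere_zero_iff_norm.2 (hsub hx)
  obtain ⟨p, hpK, hp⟩ := exists_mem_forall_norm_sq_le_inner
    (hne.mono (subset_convexHull ℝ C)) (isCompact_convexHull hC).isComplete (convex_convexHull ℝ C)
  obtain ⟨μ, hμ : 0 < μ, c₀, hc₀, rfl⟩ := convexHull_subset_Ioi_smul hsub hconv hanti hpK
  refine ⟨c₀, hc₀, arccos μ, arccos_lt_pi_div_two.2 hμ, fun x hx => arccos_le_arccos ?_⟩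
  have hpx := hp x (subset_convexHull ℝ C hx)
  rw [norm_smul, hsub hc₀, real_inner_smul_left, Real.norm_of_nonneg hμ.le] at hpx
  nlinarith
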